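/- arXiv:2308.03178 — 2 statements merged into one kernel-verified Lean document; each statement's English description precedes it below -/
import Mathlib

section
/- Let X be a real Banach space with the approximation property and let F : [0,1] → 2^X \ {∅} be a compact-valued bounded multifunction. Then I(F) = I(conv F). -/
/-!
A Riemann sum of `conv F` is the convex hull of the Riemann sum `S` of `F`, so it suffices to show
that `S` is Hausdorff-close to `conv S` for fine partitions. Take a finite-rank operator `T` close
to the identity on a compact set near which the sets `conv S` lie. In the finite-dimensional range
of `T`, the Shapley–Folkman lemma writes a point of `T (conv S) = ∑ λᵢ conv (T F(tᵢ))` as a sum in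
which all but `dim + 1` summands already lie in `λᵢ T F(tᵢ)`; replacing the exceptional ones costs
at most `2 (dim + 1) ‖T‖ M · mesh`. The limit sets are compact, being closed Hausdorff limits of
totally bounded sets.
-/

open Pointwise Filter Metric Set

/-- A tagged partition of `[0,1]` into finitely many segments with tags. -/
structure TaggedPartition where
  n : ℕ
  pt : Fin (n + 1) → ℝ
  tag : Fin n → ℝ
  pt_zero : pt 0 = 0
  pt_last : pt (Fin.last n) = 1
  pt_mono : Monotone pt
  tag_mem : ∀ i : Fin n, tag i ∈ Set.Icc (pt i.castSucc) (pt i.succ)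

/-- The diameter (mesh) of a tagged partition. -/
noncomputable def TaggedPartition.mesh (P : TaggedPartition) : ℝ :=
  ⨆ i : Fin P.n, (P.pt i.succ - P.pt i.castSucc)

/-- Riemann integral sum of a multifunction, using Minkowski sums and
pointwise scalar multiples of sets. -/
noncomputable def msum {X : Type*} [NormedAddCommGroup X] [NormedSpace ℝ X]
    (F : ℝ → Set X) (P : TaggedPartition) : Set X :=
  ∑ i : Fin P.n, (P.pt i.succ - P.pt i.castSucc) • F (P.tag i)

/-- The set `I(F)` of limits of Riemann integral sums of a multifunction `F`:
all closed nonempty subsets that are Hausdorff-distance limits of sequences of Riemann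
sums along sequences of tagged partitions whose diameters tend to `0`. -/
def limitSets {X : Type*} [NormedAddCommGroup X] [NormedSpace ℝ X]
    (F : ℝ → Set X) : Set (Set X) :=
  {A | A.Nonempty ∧ IsClosed A ∧ ∃ P : ℕ → TaggedPartition,
    Tendsto (fun k => (P k).mesh) atTop (nhds 0) ∧
    Tendsto (fun k => EMetric.hausdorffEdist (msum F (P k)) A) atTop (nhds 0)}

open Finset (univ)

theorem Fintype.card_add_card_filter_one_lt_card_fiber_le {α β : Type*} [Fintype α] [Fintype β]
    [DecidableEq β] {f : α → β} (hf : Function.Surjective f) :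
    Fintype.card β + (univ.filter fun b => 1 < (univ.filter fun a => f a = b).card).card ≤
      Fintype.card α := by
  have hα : Fintype.card α = ∑ b, (univ.filter fun a => f a = b).card :=
    Finset.card_eq_sum_card_fiberwise fun a _ => Finset.mem_univ (f a)
  rw [hα, Finset.card_filter, ← Finset.card_univ, Finset.card_eq_sum_ones,
    ← Finset.sum_add_distrib]
  refine Finset.sum_le_sum fun b _ => ?_
  obtain ⟨a, rfl⟩ := hf b
  have : 0 < (univ.filter fun a' => f a' = f a).card := Finset.card_pos.2 ⟨a, by simp⟩
  split_ifs <;> omega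

universe u v

theorem exists_sum_convexCombination_eq_sum {E : Type u} {ι : Type v} [AddCommGroup E]
    [Module ℝ E] [FiniteDimensional ℝ E] [Fintype ι] [DecidableEq ι] {B : ι → Set E}
    {y : ι → E} (hy : ∀ i, y i ∈ convexHull ℝ (B i)) :
    ∃ (κ : Type (max u v)) (_ : Fintype κ) (idx : κ → ι) (z : κ → E) (w : κ → ℝ),
      Fintype.card κ ≤ Module.finrank ℝ E + Fintype.card ι + 1 ∧ (∀ k, 0 < w k) ∧
      (∀ k, z k ∈ B (idx k)) ∧ (∀ i, ∑ k ∈ univ.filter (idx · = i), w k = 1) ∧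
      ∑ k, w k • z k = ∑ i, y i := by
  cases isEmpty_or_nonempty ι
  · exact ⟨PEmpty, inferInstance, PEmpty.elim, PEmpty.elim, PEmpty.elim, by simp,
      fun k => k.elim, fun k => k.elim, fun i => isEmptyElim i, by simp⟩
  set n : ℝ := (Fintype.card ι : ℝ)
  have hn : 0 < n := by simp [n, Fintype.card_pos]
  -- Apply Carathéodory in `E × (ι → ℝ)` to the points of `B i` tagged by `Pi.single i 1`.
  set C : Set (E × (ι → ℝ)) := {p | ∃ i, p.1 ∈ B i ∧ p.2 = Pi.single i 1}
  have hq : ∑ i, n⁻¹ • (y i, (Pi.single i 1 : ι → ℝ)) ∈ convexHull ℝ C := by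
    refine (convex_convexHull ℝ C).sum_mem (fun _ _ => by positivity)
      (by simp [n, hn.ne']) fun i _ => ?_
    have : (y i, (Pi.single i 1 : ι → ℝ)) ∈ convexHull ℝ (B i ×ˢ {Pi.single i 1}) := by
      rw [convexHull_prod, convexHull_singleton]; exact Set.mk_mem_prod (hy i) rfl
    exact convexHull_mono (fun p hp => show p ∈ C from ⟨i, hp.1, hp.2⟩) this
  obtain ⟨κ, _, z, w, hzC, hz, hw0, -, hwz⟩ := eq_pos_convex_span_of_mem_convexHull hq
  choose idx hidxB hidx using fun k => hzC (Set.mem_range_self k)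
  refine ⟨κ, inferInstance, idx, fun k => (z k).1, fun k => n * w k, ?_,
    fun k => mul_pos hn (hw0 k), hidxB, fun i => ?_, ?_⟩
  · have := hz.card_le_finrank_succ.trans (Nat.add_le_add_right (Submodule.finrank_le _) 1)
    rwa [Module.finrank_prod, Module.finrank_fintype_fun_eq_card] at this
  · have := congrFun (congrArg Prod.snd hwz) i
    simp only [Prod.snd_sum, Prod.smul_snd, Finset.sum_apply, Pi.smul_apply, hidx,
      Pi.single_apply, smul_eq_mul, mul_ite, mul_one, mul_zero] at this
    rw [Finset.sum_ite_eq, if_pos (Finset.mem_univ _), ← Finset.sum_filter] at this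
    simp_rw [← Finset.mul_sum, eq_comm (a := idx _), this, mul_inv_cancel₀ hn.ne']
  · have := congrArg Prod.fst hwz
    simp only [Prod.fst_sum, Prod.smul_fst] at this
    simp_rw [mul_smul, ← Finset.smul_sum, this, ← Finset.smul_sum, smul_inv_smul₀ hn.ne']

/-- The Shapley–Folkman lemma, with the bound `dim + 1` rather than the sharp `dim`. -/
theorem shapley_folkman {E ι : Type*} [AddCommGroup E] [Module ℝ E] [FiniteDimensional ℝ E]
    [Fintype ι] {B : ι → Set E} {y : ι → E} (hy : ∀ i, y i ∈ convexHull ℝ (B i)) :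
    ∃ (y' : ι → E) (s : Finset ι), s.card ≤ Module.finrank ℝ E + 1 ∧
      (∀ i, y' i ∈ convexHull ℝ (B i)) ∧ (∀ i ∉ s, y' i ∈ B i) ∧ ∑ i, y' i = ∑ i, y i := by
  classical
  obtain ⟨κ, _, idx, z, w, hcard, hw0, hzB, hfib, hwz⟩ := exists_sum_convexCombination_eq_sum hy
  have hsurj : Function.Surjective idx := fun i => by
    obtain ⟨k, hk⟩ := Finset.nonempty_of_sum_ne_zero ((hfib i).trans_ne one_ne_zero)
    exact ⟨k, (Finset.mem_filter.1 hk).2⟩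
  refine ⟨fun i => ∑ k ∈ univ.filter (idx · = i), w k • z k,
    univ.filter fun i => 1 < (univ.filter (idx · = i)).card, ?_, fun i => ?_,
    fun i hi => ?_, by rw [Finset.sum_fiberwise univ idx fun k => w k • z k, hwz]⟩
  · have := Fintype.card_add_card_filter_one_lt_card_fiber_le hsurj
    omega
  · refine (convex_convexHull ℝ _).sum_mem (fun k _ => (hw0 k).le) (hfib i) fun k hk => ?_
    rw [← (Finset.mem_filter.1 hk).2]
    exact subset_convexHull ℝ _ (hzB k)
  · -- `i` is used by a single point, whose weight must then be `1`.
    obtain ⟨k, hk⟩ : ∃ k, univ.filter (idx · = i) = {k} := by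
      refine Finset.card_eq_one.1 (le_antisymm (by simpa using hi) ?_)
      obtain ⟨k, rfl⟩ := hsurj i
      exact Finset.card_pos.2 ⟨k, by simp⟩
    have hki : idx k = i := by
      simpa using (Finset.ext_iff.1 hk k).2 (Finset.mem_singleton_self k)
    have hwk := hfib i
    simp only [hk, Finset.sum_singleton] at hwk ⊢
    rw [hwk, one_smul, ← hki]
    exact hzB k

theorem exists_mem_sum_norm_sub_le_of_mem_sum_convexHull {E ι : Type*} [NormedAddCommGroup E]
    [NormedSpace ℝ E] [FiniteDimensional ℝ E] [Fintype ι] {B : ι → Set E} {R : ℝ} (hR : 0 ≤ R)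
    (hne : ∀ i, (B i).Nonempty) (hB : ∀ i, ∀ b ∈ B i, ‖b‖ ≤ R) {x : E}
    (hx : x ∈ ∑ i, convexHull ℝ (B i)) :
    ∃ y ∈ ∑ i, B i, ‖x - y‖ ≤ 2 * (Module.finrank ℝ E + 1) * R := by
  classical
  obtain ⟨g, hg, rfl⟩ := (Set.mem_fintype_sum _ _).1 hx
  obtain ⟨y', s, hs, hy'conv, hy'B, hsum⟩ := shapley_folkman hg
  choose b hb using hne
  have hy'R : ∀ i, ‖y' i‖ ≤ R := fun i => mem_closedBall_zero_iff.1 <|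
    (convex_closedBall 0 R).convexHull_subset_iff.2
      (fun a ha => mem_closedBall_zero_iff.2 (hB i a ha)) (hy'conv i)
  refine ⟨∑ i, if i ∈ s then b i else y' i, (Set.mem_fintype_sum _ _).2
    ⟨_, fun i => ?_, rfl⟩, ?_⟩
  · split_ifs with hi
    exacts [hb i, hy'B i hi]
  calc ‖∑ i, g i - ∑ i, (if i ∈ s then b i else y' i)‖ = ‖∑ i ∈ s, (y' i - b i)‖ := by
        have : ∀ i, y' i - (if i ∈ s then b i else y' i) = if i ∈ s then y' i - b i else 0 := by
          intro i; split_ifs <;> simp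
        rw [← hsum, ← Finset.sum_sub_distrib]
        simp_rw [this]
        rw [Finset.sum_ite_mem, Finset.univ_inter]
    _ ≤ ∑ i ∈ s, 2 * R := norm_sum_le_of_le s fun i _ => by
        linarith [norm_sub_le (y' i) (b i), hy'R i, hB i _ (hb i)]
    _ = s.card * (2 * R) := by rw [Finset.sum_const, nsmul_eq_mul]
    _ ≤ (Module.finrank ℝ E + 1) * (2 * R) := by gcongr; exact_mod_cast hs
    _ = 2 * (Module.finrank ℝ E + 1) * R := by ring

namespace TaggedPartition

variable (P : TaggedPartition)

theorem length_nonneg (i : Fin P.n) : 0 ≤ P.pt i.succ - P.pt i.castSucc :=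
  sub_nonneg.2 (P.pt_mono (Fin.castSucc_le_succ i))

theorem length_le_mesh (i : Fin P.n) : P.pt i.succ - P.pt i.castSucc ≤ P.mesh :=
  le_ciSup (f := fun i : Fin P.n => P.pt i.succ - P.pt i.castSucc) (Set.finite_range _).bddAbove i

theorem mesh_nonneg : 0 ≤ P.mesh :=
  Real.iSup_nonneg P.length_nonneg

theorem tag_mem_Icc (i : Fin P.n) : P.tag i ∈ Icc (0 : ℝ) 1 :=
  ⟨P.pt_zero ▸ (P.pt_mono (Fin.zero_le _)).trans (P.tag_mem i).1,
    (P.tag_mem i).2.trans (P.pt_last ▸ P.pt_mono (Fin.le_last _))⟩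

end TaggedPartition

section RiemannSums

variable {X : Type*} [NormedAddCommGroup X] [NormedSpace ℝ X]

theorem msum_convexHull (F : ℝ → Set X) (P : TaggedPartition) :
    msum (fun t => convexHull ℝ (F t)) P = convexHull ℝ (msum F P) := by
  simp only [msum, convexHull_sum, convexHull_smul]

theorem image_msum {Y : Type*} [NormedAddCommGroup Y] [NormedSpace ℝ Y] (L : X →ₗ[ℝ] Y)
    (F : ℝ → Set X) (P : TaggedPartition) : L '' msum F P = msum (fun t => L '' F t) P := by
  simp only [msum, Set.image_finsetSum, image_smul_set]

theorem isCompact_msum {F : ℝ → Set X} (hF : ∀ t ∈ Icc (0 : ℝ) 1, IsCompact (F t))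
    (P : TaggedPartition) : IsCompact (msum F P) := by
  rw [msum, ← Set.image_fintype_sum_pi]
  exact (isCompact_univ_pi fun i => (hF _ (P.tag_mem_Icc i)).smul _).image
    (continuous_finsetSum _ fun i _ => continuous_apply i)

theorem exists_mem_msum_norm_map_sub_le {Y : Type*} [NormedAddCommGroup Y] [NormedSpace ℝ Y]
    [FiniteDimensional ℝ Y] (L : X →ₗ[ℝ] Y) {F : ℝ → Set X} {R : ℝ} (hR : 0 ≤ R)
    (hFne : ∀ t ∈ Icc (0 : ℝ) 1, (F t).Nonempty) (hLF : ∀ t ∈ Icc (0 : ℝ) 1, ∀ a ∈ F t, ‖L a‖ ≤ R)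
    (P : TaggedPartition) {x : X} (hx : x ∈ msum (fun t => convexHull ℝ (F t)) P) :
    ∃ z ∈ msum F P, ‖L x - L z‖ ≤ 2 * (Module.finrank ℝ Y + 1) * (P.mesh * R) := by
  have hLx := Set.mem_image_of_mem L hx
  simp_rw [image_msum, msum, L.image_convexHull, ← convexHull_smul] at hLx
  have hB : ∀ i, ∀ b ∈ (P.pt i.succ - P.pt i.castSucc) • L '' F (P.tag i), ‖b‖ ≤ P.mesh * R := by
    rintro i _ ⟨_, ⟨a, ha, rfl⟩, rfl⟩
    rw [norm_smul, Real.norm_of_nonneg (P.length_nonneg i)]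
    exact mul_le_mul (P.length_le_mesh i) (hLF _ (P.tag_mem_Icc i) a ha) (norm_nonneg _)
      P.mesh_nonneg
  obtain ⟨y, hy, hxy⟩ := exists_mem_sum_norm_sub_le_of_mem_sum_convexHull
    (mul_nonneg P.mesh_nonneg hR) (fun i => ((hFne _ (P.tag_mem_Icc i)).image L).smul_set) hB hLx
  change y ∈ msum (fun t => L '' F t) P at hy
  rw [← image_msum] at hy
  obtain ⟨z, hz, rfl⟩ := hy
  exact ⟨z, hz, hxy⟩

end RiemannSums

section HausdorffLimits

variable {α ι : Type*} [EMetricSpace α] {l : Filter ι}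

theorem TotallyBounded.of_tendsto_hausdorffEDist [l.NeBot] {S : ι → Set α} {A : Set α}
    (hS : ∀ᶠ k in l, TotallyBounded (S k))
    (h : Tendsto (fun k => hausdorffEDist (S k) A) l (nhds 0)) : TotallyBounded A := by
  have hlim : Tendsto (fun k => TopologicalSpace.Closeds.closure (S k)) l
      (nhds (TopologicalSpace.Closeds.closure A)) := by
    rw [tendsto_iff_edist_tendsto_0]
    simpa only [TopologicalSpace.Closeds.edist_eq, TopologicalSpace.Closeds.coe_closure,
      hausdorffEDist_closure] using h
  exact (TopologicalSpace.Closeds.isClosed_setOfPred_totallyBounded.mem_of_tendsto hlim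
    (hS.mono fun k hk => hk.closure)).subset subset_closure

theorem eventually_subset_thickening_of_tendsto_hausdorffEDist {S : ι → Set α} {A : Set α}
    (h : Tendsto (fun k => hausdorffEDist (S k) A) l (nhds 0)) {ρ : ℝ} (hρ : 0 < ρ) :
    ∀ᶠ k in l, S k ⊆ thickening ρ A := by
  filter_upwards [h.eventually (gt_mem_nhds (ENNReal.ofReal_pos.2 hρ))] with k hk x hx
  exact mem_thickening_iff_infEDist_lt.2 ((infEDist_le_hausdorffEDist_of_mem hx).trans_lt hk)

theorem Filter.Tendsto.hausdorffEDist_zero_trans {S T : ι → Set α} {A : Set α}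
    (hST : Tendsto (fun k => hausdorffEDist (S k) (T k)) l (nhds 0))
    (hTA : Tendsto (fun k => hausdorffEDist (T k) A) l (nhds 0)) :
    Tendsto (fun k => hausdorffEDist (S k) A) l (nhds 0) :=
  tendsto_of_tendsto_of_tendsto_of_le_of_le tendsto_const_nhds (by simpa using hST.add hTA)
    (fun _ => zero_le) fun _ => hausdorffEDist_triangle

end HausdorffLimits

section Approximation

variable {X : Type*} [NormedAddCommGroup X] [NormedSpace ℝ X]

theorem convexHull_subset_thickening_convexHull {s A : Set X} {ρ : ℝ}
    (hs : s ⊆ thickening ρ A) : convexHull ℝ s ⊆ thickening ρ (convexHull ℝ A) :=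
  convexHull_min (hs.trans (thickening_subset_of_subset ρ (subset_convexHull ℝ A)))
    ((convex_convexHull ℝ A).thickening ρ)

theorem norm_apply_sub_self_lt_of_mem_thickening (T : X →L[ℝ] X) {K : Set X} {ε ρ : ℝ}
    (hT : ∀ u ∈ K, ‖T u - u‖ < ε) {y : X} (hy : y ∈ thickening ρ K) :
    ‖T y - y‖ < ε + (‖T‖ + 1) * ρ := by
  obtain ⟨u, hu, hyu⟩ := mem_thickening_iff.1 hy
  rw [dist_eq_norm] at hyu
  calc ‖T y - y‖ = ‖T (y - u) + (T u - u) - (y - u)‖ := by rw [map_sub]; congr 1; abel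
    _ ≤ ‖T (y - u)‖ + ‖T u - u‖ + ‖y - u‖ := norm_sub_le_of_le (norm_add_le _ _) le_rfl
    _ ≤ ‖T u - u‖ + (‖T‖ + 1) * ‖y - u‖ := by linarith [T.le_opNorm (y - u)]
    _ < ε + (‖T‖ + 1) * ρ := add_lt_add (hT u hu) (by gcongr)

theorem exists_mem_msum_dist_le_of_convexHull_subset_thickening (T : X →L[ℝ] X)
    [FiniteDimensional ℝ (LinearMap.range (T : X →ₗ[ℝ] X))] {F : ℝ → Set X} {M : ℝ} (hM : 0 ≤ M)
    (hFne : ∀ t ∈ Icc (0 : ℝ) 1, (F t).Nonempty) (hFbdd : ∀ t ∈ Icc (0 : ℝ) 1, ∀ a ∈ F t, ‖a‖ ≤ M)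
    {K : Set X} {ε ρ : ℝ} (hT : ∀ u ∈ K, ‖T u - u‖ < ε) {P : TaggedPartition}
    (hP : convexHull ℝ (msum F P) ⊆ thickening ρ K) {x : X} (hx : x ∈ convexHull ℝ (msum F P)) :
    ∃ z ∈ msum F P, dist x z ≤ 2 * (ε + (‖T‖ + 1) * ρ) +
      2 * (Module.finrank ℝ (LinearMap.range (T : X →ₗ[ℝ] X)) + 1) * (‖T‖ * M) * P.mesh := by
  obtain ⟨z, hz, hxz⟩ := exists_mem_msum_norm_map_sub_le (T : X →ₗ[ℝ] X).rangeRestrict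
    (mul_nonneg (norm_nonneg T) hM) hFne
    (fun t ht a ha => (T.le_opNorm a).trans (by gcongr; exact hFbdd t ht a ha)) P
    ((msum_convexHull F P).symm ▸ hx)
  refine ⟨z, hz, ?_⟩
  have hx' := norm_apply_sub_self_lt_of_mem_thickening T hT (hP hx)
  have hz' := norm_apply_sub_self_lt_of_mem_thickening T hT (hP (subset_convexHull ℝ _ hz))
  have hTxz : ‖T x - T z‖ = ‖(T : X →ₗ[ℝ] X).rangeRestrict x - (T : X →ₗ[ℝ] X).rangeRestrict z‖ :=
    rfl
  rw [dist_eq_norm]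
  calc ‖x - z‖ = ‖(T z - z) - (T x - x) + (T x - T z)‖ := by congr 1; abel
    _ ≤ ‖T z - z‖ + ‖T x - x‖ + ‖T x - T z‖ := norm_add_le_of_le (norm_sub_le _ _) le_rfl
    _ ≤ _ := by linarith

theorem tendsto_hausdorffEDist_msum_convexHull {F : ℝ → Set X} {M : ℝ}
    (hFne : ∀ t ∈ Icc (0 : ℝ) 1, (F t).Nonempty) (hFbdd : ∀ t ∈ Icc (0 : ℝ) 1, ∀ a ∈ F t, ‖a‖ ≤ M)
    {K : Set X} (hK : ∀ ε : ℝ, 0 < ε → ∃ T : X →L[ℝ] X,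
      FiniteDimensional ℝ (LinearMap.range (T : X →ₗ[ℝ] X)) ∧ ∀ u ∈ K, ‖T u - u‖ < ε)
    {ι : Type*} {l : Filter ι} {P : ι → TaggedPartition}
    (hmesh : Tendsto (fun k => (P k).mesh) l (nhds 0))
    (hnear : ∀ ρ : ℝ, 0 < ρ → ∀ᶠ k in l, convexHull ℝ (msum F (P k)) ⊆ thickening ρ K) :
    Tendsto (fun k => hausdorffEDist (msum F (P k)) (convexHull ℝ (msum F (P k)))) l (nhds 0) := by
  obtain ⟨a, ha⟩ := hFne 0 ⟨le_rfl, zero_le_one⟩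
  have hM : 0 ≤ M := (norm_nonneg a).trans (hFbdd 0 ⟨le_rfl, zero_le_one⟩ a ha)
  refine ENNReal.tendsto_nhds_zero.2 fun δ hδ => ?_
  obtain ⟨r, -, hr, hrδ⟩ := ENNReal.lt_iff_exists_real_btwn.1 hδ
  rw [ENNReal.ofReal_pos] at hr
  obtain ⟨T, hTfin, hT⟩ := hK (r / 6) (by positivity)
  set C := 2 * (Module.finrank ℝ (LinearMap.range (T : X →ₗ[ℝ] X)) + 1) * (‖T‖ * M)
  have hTρ : (‖T‖ + 1) * (r / (6 * (‖T‖ + 1))) = r / 6 := by field_simp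
  filter_upwards [hnear _ (by positivity : 0 < r / (6 * (‖T‖ + 1))),
    hmesh.eventually (gt_mem_nhds (by positivity : 0 < r / (3 * (C + 1))))] with k hk hmeshk
  refine le_trans (hausdorffEDist_le_of_mem_edist
    (fun x hx => ⟨x, subset_convexHull ℝ _ hx, by simp⟩) fun x hx => ?_) hrδ.le
  obtain ⟨z, hz, hxz⟩ := exists_mem_msum_dist_le_of_convexHull_subset_thickening T hM hFne hFbdd
    hT hk hx
  refine ⟨z, hz, ?_⟩
  rw [edist_dist]
  refine ENNReal.ofReal_le_ofReal (hxz.trans ?_)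
  rw [lt_div_iff₀ (by positivity)] at hmeshk
  have := (P k).mesh_nonneg
  have : C * (P k).mesh ≤ r / 3 := by nlinarith
  linarith

end Approximation

/-- In a Banach space with the approximation property, every compact-valued bounded
multifunction `F` on `[0,1]` satisfies `I(F) = I(conv F)`. -/
theorem limitSets_eq_limitSets_convexHull_of_approximation_property
    {X : Type*} [NormedAddCommGroup X] [NormedSpace ℝ X] [CompleteSpace X]
    (hAP : ∀ K : Set X, IsCompact K → ∀ ε : ℝ, 0 < ε →
      ∃ T : X →L[ℝ] X, FiniteDimensional ℝ (LinearMap.range (T : X →ₗ[ℝ] X)) ∧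
        ∀ x ∈ K, ‖T x - x‖ < ε)
    (F : ℝ → Set X)
    (hFne : ∀ t ∈ Set.Icc (0 : ℝ) 1, (F t).Nonempty)
    (hFcpt : ∀ t ∈ Set.Icc (0 : ℝ) 1, IsCompact (F t))
    (hFbdd : ∃ M : ℝ, ∀ t ∈ Set.Icc (0 : ℝ) 1, ∀ a ∈ F t, ‖a‖ ≤ M) :
    limitSets F = limitSets (fun t => convexHull ℝ (F t)) := by
  obtain ⟨M, hM⟩ := hFbdd
  have hS k := (isCompact_msum hFcpt k).totallyBounded
  have hconvS k := totallyBounded_convexHull.2 (hS k)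
  ext A
  simp only [limitSets, msum_convexHull, mem_ofPred_eq]
  refine and_congr_right fun _ => and_congr_right fun hcl => exists_congr fun P =>
    and_congr_right fun hmesh => ⟨fun hlim => ?_, fun hlim => ?_⟩
  · have hA := (TotallyBounded.of_tendsto_hausdorffEDist (.of_forall fun k => hS (P k)) hlim)
    have hK := (totallyBounded_convexHull.2 hA).closure.isCompact_of_isClosed isClosed_closure
    have hnear (ρ : ℝ) (hρ : 0 < ρ) : ∀ᶠ k in atTop,
        convexHull ℝ (msum F (P k)) ⊆ thickening ρ (closure (convexHull ℝ A)) := by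
      filter_upwards [eventually_subset_thickening_of_tendsto_hausdorffEDist hlim hρ] with k hk
      rw [thickening_closure]
      exact convexHull_subset_thickening_convexHull hk
    exact ((tendsto_hausdorffEDist_msum_convexHull hFne hM (hAP _ hK) hmesh hnear).congr
      fun k => hausdorffEDist_comm).hausdorffEDist_zero_trans hlim
  · have hA := (TotallyBounded.of_tendsto_hausdorffEDist (.of_forall fun k => hconvS (P k)) hlim)
    exact (tendsto_hausdorffEDist_msum_convexHull hFne hM (hAP A (hA.isCompact_of_isClosed hcl))
      hmesh fun ρ hρ => eventually_subset_thickening_of_tendsto_hausdorffEDist hlim hρ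
      ).hausdorffEDist_zero_trans hlim
end

section
/- Let X = L^1([0,1]) (real Lebesgue space). There exists a bounded multifunction F : [0,1] → 2^X \ {∅} such that some element A ∈ I(F) is not a convex set. -/
open Pointwise Filter Metric Set

/-- The real Lebesgue space `L¹([0,1])`. -/
noncomputable abbrev L1unit : Type :=
  MeasureTheory.Lp ℝ 1 ((MeasureTheory.volume : MeasureTheory.Measure ℝ).restrict (Set.Icc 0 1))

/-! Let `F` take, at the midpoint `(2j+1)/2^(k+1)` of the `j`-th dyadic interval `B` of level
`k`, the value `2^k • {1_E : E ⊆ B measurable}`, and `{0}` elsewhere; the 2-adic valuation shows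
that a dyadic midpoint determines `k` and `j`. Minkowski sums of sets of indicators of subsets of
disjoint sets are again such sets, so every Riemann sum of `F` over the level-`k` dyadic partition
tagged at midpoints is exactly `{1_E : E ⊆ [0,1)}`. Its closure therefore lies in `I(F)`, and it
is not convex: it contains `0` and `1_[0,1)`, while `½ • 1_[0,1)` is at distance `½` from every
indicator. -/

open MeasureTheory

section LpIndicators

variable {α : Type*} [MeasurableSpace α] {p : ENNReal} {μ : Measure α} [IsFiniteMeasure μ]

variable (p μ) in
def lpIndicators (S : Set α) : Set (Lp ℝ p μ) :=
  {f | ∃ E ⊆ S, ∃ hE : MeasurableSet E, f = indicatorConstLp p hE (measure_ne_top μ E) 1}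

lemma zero_mem_lpIndicators (S : Set α) : (0 : Lp ℝ p μ) ∈ lpIndicators p μ S :=
  ⟨∅, empty_subset S, MeasurableSet.empty, indicatorConstLp_empty.symm⟩

lemma lpIndicators_empty : lpIndicators p μ (∅ : Set α) = 0 := by
  ext f
  refine ⟨?_, fun hf => (Set.mem_zero.mp hf) ▸ zero_mem_lpIndicators ∅⟩
  rintro ⟨E, hE, hEm, rfl⟩
  obtain rfl := subset_empty_iff.mp hE
  exact indicatorConstLp_empty

lemma lpIndicators_union {S T : Set α} (hS : MeasurableSet S) (hST : Disjoint S T) :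
    lpIndicators p μ (S ∪ T) = lpIndicators p μ S + lpIndicators p μ T := by
  ext f
  constructor
  · rintro ⟨E, hE, hEm, rfl⟩
    refine ⟨_, ⟨E ∩ S, inter_subset_right, hEm.inter hS, rfl⟩,
      _, ⟨E \ S, fun x hx => (hE hx.1).resolve_left hx.2, hEm.diff hS, rfl⟩, ?_⟩
    dsimp only
    rw [← indicatorConstLp_disjoint_union _ _ _ _
      (disjoint_sdiff_right.mono_left inter_subset_right)]
    congr 1
    exact inter_union_sdiff E S
  · rintro ⟨_, ⟨E, hE, hEm, rfl⟩, _, ⟨E', hE', hE'm, rfl⟩, rfl⟩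
    exact ⟨E ∪ E', union_subset_union hE hE', hEm.union hE'm,
      (indicatorConstLp_disjoint_union hEm hE'm _ _ (hST.mono hE hE') 1).symm⟩

lemma sum_lpIndicators_Ico {μ : Measure ℝ} [IsFiniteMeasure μ] {a : ℕ → ℝ}
    (ha : Monotone a) (m : ℕ) :
    ∑ i ∈ Finset.range m, lpIndicators p μ (Ico (a i) (a (i + 1))) =
      lpIndicators p μ (Ico (a 0) (a m)) := by
  induction m with
  | zero => simp [lpIndicators_empty]
  | succ m ih =>
    rw [Finset.sum_range_succ, ih, ← lpIndicators_union measurableSet_Ico Ico_disjoint_Ico_same,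
      Ico_union_Ico_eq_Ico (ha m.zero_le) (ha m.le_succ)]

lemma norm_le_of_mem_lpIndicators {S : Set α} {f : Lp ℝ 1 μ} (hf : f ∈ lpIndicators 1 μ S) :
    ‖f‖ ≤ μ.real S := by
  obtain ⟨E, hE, hEm, rfl⟩ := hf
  rw [norm_indicatorConstLp one_ne_zero ENNReal.one_ne_top]
  simpa using measureReal_mono hE

variable [Fact (1 ≤ p)]

lemma norm_half_indicatorConstLp_le_dist {S E : Set α} (hS : MeasurableSet S)
    (hE : MeasurableSet E) (hES : E ⊆ S) :
    ‖(1 / 2 : ℝ) • indicatorConstLp p hS (measure_ne_top μ S) (1 : ℝ)‖ ≤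
      dist ((1 / 2 : ℝ) • indicatorConstLp p hS (measure_ne_top μ S) (1 : ℝ))
        (indicatorConstLp p hE (measure_ne_top μ E) 1) := by
  rw [dist_eq_norm]
  apply Lp.norm_le_norm_of_ae_le
  filter_upwards [
    Lp.coeFn_sub ((1 / 2 : ℝ) • indicatorConstLp p hS (measure_ne_top μ S) (1 : ℝ))
      (indicatorConstLp p hE (measure_ne_top μ E) 1),
    Lp.coeFn_smul (1 / 2 : ℝ) (indicatorConstLp p hS (measure_ne_top μ S) (1 : ℝ)),
    indicatorConstLp_coeFn (p := p) (hs := hS) (hμs := measure_ne_top μ S) (c := (1 : ℝ)),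
    indicatorConstLp_coeFn (p := p) (hs := hE) (hμs := measure_ne_top μ E) (c := (1 : ℝ))]
    with x hsub hsmul hindS hindE
  rw [hsub, Pi.sub_apply, hsmul, Pi.smul_apply, hindS, hindE]
  by_cases hxE : x ∈ E
  · simp only [indicator_of_mem hxE, indicator_of_mem (hES hxE)]
    norm_num
  · simp [hxE]

theorem not_convex_closure_lpIndicators {S : Set α} (hS : MeasurableSet S)
    (hμS : μ S ≠ 0) : ¬ Convex ℝ (closure (lpIndicators p μ S)) := by
  intro hconv
  set g := indicatorConstLp p hS (measure_ne_top μ S) (1 : ℝ)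
  have hg : g ∈ closure (lpIndicators p μ S) := subset_closure ⟨S, subset_rfl, hS, rfl⟩
  have hmid : (1 / 2 : ℝ) • g ∈ closure (lpIndicators p μ S) := by
    simpa using hconv (subset_closure (zero_mem_lpIndicators S)) hg
      (by norm_num : (0 : ℝ) ≤ 1 / 2) (by norm_num : (0 : ℝ) ≤ 1 / 2) (by norm_num)
  have hpos : 0 < ‖(1 / 2 : ℝ) • g‖ := by
    have : 0 < μ.real S := ENNReal.toReal_pos hμS (measure_ne_top μ S)
    rw [norm_smul, norm_indicatorConstLp' (zero_lt_one.trans_le Fact.out).ne' hμS, norm_one,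
      one_mul]
    exact mul_pos (by norm_num) (Real.rpow_pos_of_pos this _)
  obtain ⟨_, ⟨E, hES, hE, rfl⟩, hdist⟩ := Metric.mem_closure_iff.mp hmid _ hpos
  exact (norm_half_indicatorConstLp_le_dist hS hE hES).not_gt hdist

end LpIndicators

lemma closure_mem_limitSets {X : Type*} [NormedAddCommGroup X] [NormedSpace ℝ X]
    {F : ℝ → Set X} {B : Set X} (hB : B.Nonempty) (P : ℕ → TaggedPartition)
    (hmesh : Tendsto (fun k => (P k).mesh) atTop (nhds 0)) (hsum : ∀ k, msum F (P k) = B) :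
    closure B ∈ limitSets F :=
  ⟨hB.closure, isClosed_closure, P, hmesh, by
    simp only [hsum]
    exact tendsto_const_nhds.congr fun _ => Metric.hausdorffEDist_self_closure.symm⟩

noncomputable def dyadicMidpoint (k j : ℕ) : ℝ := (2 * j + 1) / 2 ^ (k + 1)

def dyadicInterval (k j : ℕ) : Set ℝ := Ico (j / 2 ^ k) ((j + 1) / 2 ^ k)

lemma padicValNat_mul_pow_of_not_dvd {p a : ℕ} [Fact p.Prime] (ha : ¬p ∣ a) (m : ℕ) :
    padicValNat p (a * p ^ m) = m := by
  have ha₀ : a ≠ 0 := by rintro rfl; exact ha (dvd_zero p)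
  rw [padicValNat.mul ha₀ (pow_ne_zero m (Fact.out : p.Prime).ne_zero), padicValNat.prime_pow,
    padicValNat.eq_zero_of_not_dvd ha, zero_add]

lemma injective_uncurry_dyadicMidpoint : Function.Injective (Function.uncurry dyadicMidpoint) := by
  rintro ⟨k, j⟩ ⟨k', j'⟩ h
  have hnat : (2 * j + 1) * 2 ^ (k' + 1) = (2 * j' + 1) * 2 ^ (k + 1) := by
    simp only [Function.uncurry_apply_pair, dyadicMidpoint] at h
    rw [div_eq_div_iff (by positivity) (by positivity)] at h
    exact_mod_cast h
  have hk : k' = k := by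
    simpa [padicValNat_mul_pow_of_not_dvd (p := 2) (by omega : ¬2 ∣ 2 * _ + 1)] using
      congrArg (padicValNat 2) hnat
  subst hk
  have hj : j = j' := by
    have := Nat.eq_of_mul_eq_mul_right (by positivity) hnat
    omega
  rw [hj]

lemma dyadicMidpoint_mem_Icc (k j : ℕ) :
    dyadicMidpoint k j ∈ Icc ((j : ℝ) / 2 ^ k) ((j + 1) / 2 ^ k) := by
  rw [dyadicMidpoint, pow_succ]
  have h2k : (0 : ℝ) < 2 ^ k := by positivity
  constructor <;> rw [div_le_div_iff₀ (by positivity) (by positivity)] <;> nlinarith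

noncomputable def dyadicPartition (k : ℕ) : TaggedPartition where
  n := 2 ^ k
  pt i := (i : ℕ) / 2 ^ k
  tag j := dyadicMidpoint k j
  pt_zero := by simp
  pt_last := by simp
  pt_mono a b hab := by
    dsimp only
    gcongr
    exact hab
  tag_mem j := by simpa using dyadicMidpoint_mem_Icc k j

lemma dyadicPartition_length (k : ℕ) (i : Fin (dyadicPartition k).n) :
    (dyadicPartition k).pt i.succ - (dyadicPartition k).pt i.castSucc = (2 ^ k)⁻¹ := by
  change ((i.succ : ℕ) : ℝ) / 2 ^ k - ((i.castSucc : ℕ) : ℝ) / 2 ^ k = (2 ^ k)⁻¹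
  rw [Fin.val_succ, Fin.val_castSucc]
  push_cast
  ring

lemma tendsto_mesh_dyadicPartition :
    Tendsto (fun k => (dyadicPartition k).mesh) atTop (nhds 0) := by
  have hmesh : ∀ k, (dyadicPartition k).mesh = (2⁻¹ : ℝ) ^ k := fun k => by
    have : Nonempty (Fin (dyadicPartition k).n) := ⟨⟨0, show 0 < 2 ^ k by positivity⟩⟩
    simp only [TaggedPartition.mesh]
    rw [inv_pow, ← ciSup_const (ι := Fin (dyadicPartition k).n) (a := ((2 : ℝ) ^ k)⁻¹)]
    exact iSup_congr (dyadicPartition_length k)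
  simp only [hmesh]
  exact tendsto_pow_atTop_nhds_zero_of_lt_one (by norm_num) (by norm_num)

noncomputable def dyadicMultifunction : ℝ → Set L1unit :=
  Function.extend (Function.uncurry dyadicMidpoint)
    (fun kj => (2 : ℝ) ^ kj.1 • lpIndicators 1 _ (dyadicInterval kj.1 kj.2)) fun _ => {0}

lemma dyadicMultifunction_dyadicMidpoint (k j : ℕ) :
    dyadicMultifunction (dyadicMidpoint k j) =
      (2 : ℝ) ^ k • lpIndicators 1 _ (dyadicInterval k j) :=
  injective_uncurry_dyadicMidpoint.extend_apply _ _ (k, j)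

lemma dyadicMultifunction_of_notMem {t : ℝ} (ht : ∀ k j, dyadicMidpoint k j ≠ t) :
    dyadicMultifunction t = {0} :=
  Function.extend_apply' _ _ t fun ⟨⟨k, j⟩, h⟩ => ht k j h

lemma zero_mem_dyadicMultifunction (t : ℝ) : 0 ∈ dyadicMultifunction t := by
  by_cases ht : ∃ k j, dyadicMidpoint k j = t
  · obtain ⟨k, j, rfl⟩ := ht
    rw [dyadicMultifunction_dyadicMidpoint]
    exact ⟨0, zero_mem_lpIndicators _, smul_zero _⟩
  · simp only [not_exists] at ht
    rw [dyadicMultifunction_of_notMem ht]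
    rfl

lemma norm_le_one_of_mem_dyadicMultifunction {t : ℝ} {a : L1unit}
    (ha : a ∈ dyadicMultifunction t) : ‖a‖ ≤ 1 := by
  by_cases ht : ∃ k j, dyadicMidpoint k j = t
  · obtain ⟨k, j, rfl⟩ := ht
    rw [dyadicMultifunction_dyadicMidpoint] at ha
    obtain ⟨f, hf, rfl⟩ := ha
    have hf' : ‖f‖ ≤ (2 ^ k)⁻¹ := calc
      ‖f‖ ≤ ((volume : Measure ℝ).restrict (Icc 0 1)).real (dyadicInterval k j) :=
        norm_le_of_mem_lpIndicators hf
      _ ≤ (volume : Measure ℝ).real (dyadicInterval k j) := by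
        rw [measureReal_restrict_apply (by exact measurableSet_Ico)]
        exact measureReal_mono inter_subset_left (by simp [dyadicInterval])
      _ = (2 ^ k)⁻¹ := by
        rw [dyadicInterval, Real.volume_real_Ico_of_le (by gcongr; linarith)]
        ring
    rw [norm_smul, Real.norm_of_nonneg (by positivity)]
    calc (2 : ℝ) ^ k * ‖f‖ ≤ 2 ^ k * (2 ^ k)⁻¹ := by gcongr
      _ = 1 := mul_inv_cancel₀ (by positivity)
  · simp only [not_exists] at ht
    rw [dyadicMultifunction_of_notMem ht, mem_singleton_iff] at ha
    simp [ha]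

lemma msum_dyadicPartition (k : ℕ) :
    msum dyadicMultifunction (dyadicPartition k) = lpIndicators 1 _ (Ico 0 1) := by
  have hterm : ∀ i : Fin (dyadicPartition k).n,
      ((dyadicPartition k).pt i.succ - (dyadicPartition k).pt i.castSucc) •
        dyadicMultifunction ((dyadicPartition k).tag i) =
      lpIndicators 1 _ (dyadicInterval k i) := by
    intro i
    rw [dyadicPartition_length, show (dyadicPartition k).tag i = dyadicMidpoint k i from rfl,
      dyadicMultifunction_dyadicMidpoint, smul_smul, inv_mul_cancel₀ (by positivity), one_smul]
  rw [msum, Fintype.sum_congr _ _ hterm,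
    Fin.sum_univ_eq_sum_range (fun i => lpIndicators 1 _ (dyadicInterval k i))]
  have hmono : Monotone fun i : ℕ => (i : ℝ) / 2 ^ k := fun a b hab =>
    div_le_div_of_nonneg_right (by exact_mod_cast hab) (by positivity)
  change ∑ i ∈ Finset.range (2 ^ k), _ = _
  simpa [dyadicInterval] using
    sum_lpIndicators_Ico (p := 1) (μ := (volume : Measure ℝ).restrict (Icc 0 1)) hmono (2 ^ k)

/-- In `X = L¹([0,1])` there is a bounded multifunction `F` on `[0,1]` such that some
element of `I(F)` is not convex. -/
theorem exists_boundedMultifunction_with_nonconvex_limit :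
    ∃ F : ℝ → Set L1unit,
      (∀ t ∈ Set.Icc (0 : ℝ) 1, (F t).Nonempty) ∧
      (∃ M : ℝ, ∀ t ∈ Set.Icc (0 : ℝ) 1, ∀ a ∈ F t, ‖a‖ ≤ M) ∧
      ∃ A ∈ limitSets F, ¬ Convex ℝ A := by
  have hpos : (volume : Measure ℝ).restrict (Icc 0 1) (Ico 0 1) ≠ 0 := by
    simp [Measure.restrict_apply measurableSet_Ico, inter_eq_left.mpr Ico_subset_Icc_self]
  exact ⟨dyadicMultifunction, fun t _ => ⟨0, zero_mem_dyadicMultifunction t⟩,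
    ⟨1, fun _ _ _ ha => norm_le_one_of_mem_dyadicMultifunction ha⟩,
    closure (lpIndicators 1 _ (Ico 0 1)),
    closure_mem_limitSets ⟨0, zero_mem_lpIndicators _⟩ dyadicPartition
      tendsto_mesh_dyadicPartition msum_dyadicPartition,
    not_convex_closure_lpIndicators measurableSet_Ico hpos⟩
end
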